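/- A TNFA admits a topological ordering of its states with respect to forward transitions in which the two endpoints of every α-transition (α ∈ Σ) occupy consecutive positions. -/
import Mathlib


inductive Regex (α : Type) where
  | char : α → Regex α
  | cat  : Regex α → Regex α → Regex α
  | alt  : Regex α → Regex α → Regex α
  | star : Regex α → Regex α

namespace Regex
variable {α : Type}
/-- number of characters and operators in `R` (nodes of the parse tree). -/
def size : Regex α → ℕ
  | char _ => 1
  | cat S T => S.size + T.size + 1
  | alt S T => S.size + T.size + 1
  | star S => S.size + 1

/-- the language generated by `R`. -/
def lang : Regex α → Set (List α)
  | char a => {[a]}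
  | cat S T => {w | ∃ u v, u ∈ S.lang ∧ v ∈ T.lang ∧ w = u ++ v}
  | alt S T => S.lang ∪ T.lang
  | star S => {w | ∃ l : List (List α), (∀ u ∈ l, u ∈ S.lang) ∧ w = l.flatten}
end Regex

/-- An NFA with ε-transitions (`none` labels), a single start and accepting state,
and a distinguished set of back transitions. -/
structure TNFA (α : Type) where
  states : Finset ℕ
  start : ℕ
  accept : ℕ
  trans : Finset (ℕ × Option α × ℕ)
  back : Finset (ℕ × ℕ)

variable {α : Type} [DecidableEq α]

/-- Thompson's construction, allocating the states `[b, b + 2·size R)`;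
the start state is `b` and the accepting state is `b+1`. -/
def thompson : Regex α → ℕ → TNFA α
  | .char a, b => ⟨{b, b+1}, b, b+1, {(b, some a, b+1)}, ∅⟩
  | .cat S T, b =>
    let A := thompson S (b+2)
    let B := thompson T (b+2+2*S.size)
    ⟨insert b (insert (b+1) (A.states ∪ B.states)), b, b+1,
      ({(b, none, A.start), (A.accept, none, B.start), (B.accept, none, b+1)} :
        Finset (ℕ × Option α × ℕ)) ∪ A.trans ∪ B.trans,
      A.back ∪ B.back⟩
  | .alt S T, b =>
    let A := thompson S (b+2)
    let B := thompson T (b+2+2*S.size)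
    ⟨insert b (insert (b+1) (A.states ∪ B.states)), b, b+1,
      ({(b, none, A.start), (b, none, B.start), (A.accept, none, b+1), (B.accept, none, b+1)} :
        Finset (ℕ × Option α × ℕ)) ∪ A.trans ∪ B.trans,
      A.back ∪ B.back⟩
  | .star S, b =>
    let A := thompson S (b+2)
    ⟨insert b (insert (b+1) A.states), b, b+1,
      ({(b, none, A.start), (b, none, b+1), (A.accept, none, b+1), (A.accept, none, A.start)} :
        Finset (ℕ × Option α × ℕ)) ∪ A.trans,
      insert (A.accept, A.start) A.back⟩

/-- `Path N s w t`: there is a path from `s` to `t` whose non-ε labels spell `w`. -/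
inductive TNFA.Path (N : TNFA α) : ℕ → List α → ℕ → Prop where
  | refl (s : ℕ) : TNFA.Path N s [] s
  | eps {s t u : ℕ} {w : List α} :
      (s, none, t) ∈ N.trans → TNFA.Path N t w u → TNFA.Path N s w u
  | sym {s t u : ℕ} {w : List α} {a : α} :
      (s, some a, t) ∈ N.trans → TNFA.Path N t w u → TNFA.Path N s (a :: w) u

/-- states reachable from `S` via a single `a`-transition. -/
def TNFA.Move (N : TNFA α) (S : Set ℕ) (a : α) : Set ℕ :=
  {t | ∃ s ∈ S, (s, some a, t) ∈ N.trans}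

def TNFA.epsStep (N : TNFA α) (s t : ℕ) : Prop := (s, none, t) ∈ N.trans

/-- the ε-closure of `S`. -/
def TNFA.Close (N : TNFA α) (S : Set ℕ) : Set ℕ :=
  {t | ∃ s ∈ S, Relation.ReflTransGen N.epsStep s t}


lemma Regex.size_pos {α : Type} (R : Regex α) : 1 ≤ R.size := by
  induction R <;> simp [Regex.size] <;> omega

lemma thompson_start (R : Regex α) (b : ℕ) : (thompson R b).start = b := by
  cases R <;> rfl

lemma thompson_accept (R : Regex α) (b : ℕ) : (thompson R b).accept = b + 1 := by
  cases R <;> rfl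

lemma thompson_states (R : Regex α) (b : ℕ) :
    (thompson R b).states = Finset.Ico b (b + 2 * R.size) := by
  induction R generalizing b with
  | char a => ext x; simp [thompson, Regex.size]; omega
  | cat S T ihS ihT =>
      have hS := S.size_pos; have hT := T.size_pos
      ext x; simp [thompson, Regex.size, ihS, ihT]; omega
  | alt S T ihS ihT =>
      have hS := S.size_pos; have hT := T.size_pos
      ext x; simp [thompson, Regex.size, ihS, ihT]; omega
  | star S ihS =>
      have hS := S.size_pos
      ext x; simp [thompson, Regex.size, ihS]; omega

lemma thompson_trans_bound (R : Regex α) (b : ℕ) {s : ℕ} {l : Option α} {t : ℕ}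
    (h : (s, l, t) ∈ (thompson R b).trans) :
    b ≤ s ∧ s < b + 2 * R.size ∧ b ≤ t ∧ t < b + 2 * R.size := by
  induction R generalizing b with
  | char a =>
      simp [thompson, Prod.ext_iff] at h
      obtain ⟨rfl, -, rfl⟩ := h
      simp only [Regex.size]
      omega
  | cat S T ihS ihT =>
      have hS := S.size_pos; have hT := T.size_pos
      simp only [thompson, thompson_start, thompson_accept, Finset.mem_union,
        Finset.mem_insert, Finset.mem_singleton, Prod.mk.injEq] at h
      simp only [Regex.size]
      rcases h with ((⟨rfl, -, rfl⟩ | ⟨rfl, -, rfl⟩ | ⟨rfl, -, rfl⟩) | h) | h <;>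
        first | omega | (have := ihS _ h; omega) | (have := ihT _ h; omega)
  | alt S T ihS ihT =>
      have hS := S.size_pos; have hT := T.size_pos
      simp only [thompson, thompson_start, thompson_accept, Finset.mem_union,
        Finset.mem_insert, Finset.mem_singleton, Prod.mk.injEq] at h
      simp only [Regex.size]
      rcases h with ((⟨rfl, -, rfl⟩ | ⟨rfl, -, rfl⟩ | ⟨rfl, -, rfl⟩ | ⟨rfl, -, rfl⟩) | h) | h <;>
        first | omega | (have := ihS _ h; omega) | (have := ihT _ h; omega)
  | star S ihS =>
      have hS := S.size_pos
      simp only [thompson, thompson_start, thompson_accept, Finset.mem_union,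
        Finset.mem_insert, Finset.mem_singleton, Prod.mk.injEq] at h
      simp only [Regex.size]
      rcases h with (⟨rfl, -, rfl⟩ | ⟨rfl, -, rfl⟩ | ⟨rfl, -, rfl⟩ | ⟨rfl, -, rfl⟩) | h <;>
        first | omega | (have := ihS _ h; omega)

theorem thompson_aux (R : Regex α) (b : ℕ) :
    ∃ f : ℕ → ℕ,
      (∀ s ∈ (thompson R b).states, f s < 2 * R.size) ∧
      (∀ k < 2 * R.size, ∃ s ∈ (thompson R b).states, f s = k) ∧
      (∀ (s : ℕ) (l : Option α) (t : ℕ), (s, l, t) ∈ (thompson R b).trans →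
        (s, t) ∉ (thompson R b).back → f s < f t) ∧
      (∀ (s : ℕ) (a : α) (t : ℕ), (s, some a, t) ∈ (thompson R b).trans → f t = f s + 1) ∧
      f b = 0 ∧ f (b + 1) = 2 * R.size - 1 := by
  induction R generalizing b with
  | char c =>
      set f : ℕ → ℕ := fun s => s - b with hf
      have e : ∀ s, f s = s - b := fun s => rfl
      refine ⟨f, ?_, ?_, ?_, ?_, by rw [e]; omega, by rw [e]; simp only [Regex.size]; omega⟩
      · intro s hs
        rw [thompson_states, Finset.mem_Ico] at hs
        rw [e]
        simp only [Regex.size] at hs ⊢; omega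
      · intro k hk
        refine ⟨b + k, ?_, by rw [e]; omega⟩
        rw [thompson_states, Finset.mem_Ico]
        simp only [Regex.size] at hk ⊢; omega
      · intro s l t ht _
        simp only [thompson, Finset.mem_singleton, Prod.mk.injEq] at ht
        obtain ⟨rfl, -, rfl⟩ := ht
        rw [e, e]; omega
      · intro s a t ht
        simp only [thompson, Finset.mem_singleton, Prod.mk.injEq] at ht
        obtain ⟨rfl, -, rfl⟩ := ht
        rw [e, e]; omega
  | cat S T ihS ihT =>
      have hS := S.size_pos; have hT := T.size_pos
      obtain ⟨fA, hAb, hAsurj, hAtopo, hAcons, hA0, hA1⟩ := ihS (b + 2)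
      obtain ⟨fB, hBb, hBsurj, hBtopo, hBcons, hB0, hB1⟩ := ihT (b + 2 + 2 * S.size)
      rw [thompson_states] at hAb hAsurj hBb hBsurj
      set f : ℕ → ℕ := fun s =>
        if s = b then 0
        else if s = b + 1 then 2 * (S.size + T.size) + 1
        else if s < b + 2 + 2 * S.size then fA s + 1
        else fB s + (2 * S.size + 1) with hf
      have eb : f b = 0 := by simp [hf]
      have eb1 : f (b + 1) = 2 * (S.size + T.size) + 1 := by
        simp only [hf]; rw [if_neg (by omega)]; simp
      have eA : ∀ s, b + 2 ≤ s → s < b + 2 + 2 * S.size → f s = fA s + 1 := by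
        intro s h1 h2
        simp only [hf]; rw [if_neg (by omega), if_neg (by omega), if_pos h2]
      have eB : ∀ s, b + 2 + 2 * S.size ≤ s → f s = fB s + (2 * S.size + 1) := by
        intro s h1
        simp only [hf]; rw [if_neg (by omega), if_neg (by omega), if_neg (by omega)]
      have hAb' : ∀ s, b + 2 ≤ s → s < b + 2 + 2 * S.size → fA s < 2 * S.size := by
        intro s h1 h2; exact hAb s (Finset.mem_Ico.2 ⟨h1, h2⟩)
      have hBb' : ∀ s, b + 2 + 2 * S.size ≤ s → s < b + 2 + 2 * S.size + 2 * T.size →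
          fB s < 2 * T.size := by
        intro s h1 h2; exact hBb s (Finset.mem_Ico.2 ⟨h1, h2⟩)
      refine ⟨f, ?_, ?_, ?_, ?_, eb, ?_⟩
      · intro s hs
        rw [thompson_states, Finset.mem_Ico] at hs
        simp only [Regex.size] at hs ⊢
        rcases Nat.lt_or_ge s (b + 2) with h | h
        · have hsb : s = b ∨ s = b + 1 := by omega
          rcases hsb with rfl | rfl
          · rw [eb]; omega
          · rw [eb1]; omega
        rcases Nat.lt_or_ge s (b + 2 + 2 * S.size) with h2 | h2
        · rw [eA s h h2]; have := hAb' s h h2; omega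
        · rw [eB s h2]
          have := hBb' s h2 (by omega)
          omega
      · intro k hk
        simp only [Regex.size] at hk
        by_cases hk0 : k = 0
        · refine ⟨b, ?_, ?_⟩
          · rw [thompson_states, Finset.mem_Ico]; simp only [Regex.size]; omega
          · rw [eb]; omega
        by_cases hk1 : k ≤ 2 * S.size
        · obtain ⟨s, hs, hfs⟩ := hAsurj (k - 1) (by omega)
          rw [Finset.mem_Ico] at hs
          refine ⟨s, ?_, ?_⟩
          · rw [thompson_states, Finset.mem_Ico]; simp only [Regex.size]; omega
          · rw [eA s hs.1 hs.2, hfs]; omega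
        by_cases hk2 : k ≤ 2 * S.size + 2 * T.size
        · obtain ⟨s, hs, hfs⟩ := hBsurj (k - (2 * S.size + 1)) (by omega)
          rw [Finset.mem_Ico] at hs
          refine ⟨s, ?_, ?_⟩
          · rw [thompson_states, Finset.mem_Ico]; simp only [Regex.size]; omega
          · rw [eB s hs.1, hfs]; omega
        · refine ⟨b + 1, ?_, ?_⟩
          · rw [thompson_states, Finset.mem_Ico]; simp only [Regex.size]; omega
          · rw [eb1]; omega
      · intro s l t ht hnb
        simp only [thompson, thompson_start, thompson_accept, Finset.mem_union,
          Finset.mem_insert, Finset.mem_singleton, Prod.mk.injEq, not_or] at ht hnb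
        rcases ht with ((⟨hs, -, ht'⟩ | ⟨hs, -, ht'⟩ | ⟨hs, -, ht'⟩) | h) | h
        · rw [hs, ht', eb, eA (b + 2) le_rfl (by omega)]; omega
        · rw [hs, ht', eA (b + 2 + 1) (by omega) (by omega), eB _ le_rfl, hA1, hB0]; omega
        · rw [hs, ht', eB _ (by omega), eb1, hB1]; omega
        · have hbd := thompson_trans_bound S (b + 2) h
          rw [eA s hbd.1 hbd.2.1, eA t hbd.2.2.1 hbd.2.2.2]
          have := hAtopo s l t h hnb.1
          omega
        · have hbd := thompson_trans_bound T (b + 2 + 2 * S.size) h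
          rw [eB s hbd.1, eB t hbd.2.2.1]
          have := hBtopo s l t h hnb.2
          omega
      · intro s a t ht
        simp only [thompson, thompson_start, thompson_accept, Finset.mem_union,
          Finset.mem_insert, Finset.mem_singleton, Prod.mk.injEq, reduceCtorEq, false_and, and_false, false_or, or_false] at ht
        rcases ht with h | h
        · have hbd := thompson_trans_bound S (b + 2) h
          rw [eA s hbd.1 hbd.2.1, eA t hbd.2.2.1 hbd.2.2.2, hAcons s a t h]
        · have hbd := thompson_trans_bound T (b + 2 + 2 * S.size) h
          rw [eB s hbd.1, eB t hbd.2.2.1, hBcons s a t h]; omega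
      · rw [eb1]; simp only [Regex.size]; omega
  | alt S T ihS ihT =>
      have hS := S.size_pos; have hT := T.size_pos
      obtain ⟨fA, hAb, hAsurj, hAtopo, hAcons, hA0, hA1⟩ := ihS (b + 2)
      obtain ⟨fB, hBb, hBsurj, hBtopo, hBcons, hB0, hB1⟩ := ihT (b + 2 + 2 * S.size)
      rw [thompson_states] at hAb hAsurj hBb hBsurj
      set f : ℕ → ℕ := fun s =>
        if s = b then 0
        else if s = b + 1 then 2 * (S.size + T.size) + 1
        else if s < b + 2 + 2 * S.size then fA s + 1
        else fB s + (2 * S.size + 1) with hf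
      have eb : f b = 0 := by simp [hf]
      have eb1 : f (b + 1) = 2 * (S.size + T.size) + 1 := by
        simp only [hf]; rw [if_neg (by omega)]; simp
      have eA : ∀ s, b + 2 ≤ s → s < b + 2 + 2 * S.size → f s = fA s + 1 := by
        intro s h1 h2
        simp only [hf]; rw [if_neg (by omega), if_neg (by omega), if_pos h2]
      have eB : ∀ s, b + 2 + 2 * S.size ≤ s → f s = fB s + (2 * S.size + 1) := by
        intro s h1
        simp only [hf]; rw [if_neg (by omega), if_neg (by omega), if_neg (by omega)]
      have hAb' : ∀ s, b + 2 ≤ s → s < b + 2 + 2 * S.size → fA s < 2 * S.size := by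
        intro s h1 h2; exact hAb s (Finset.mem_Ico.2 ⟨h1, h2⟩)
      have hBb' : ∀ s, b + 2 + 2 * S.size ≤ s → s < b + 2 + 2 * S.size + 2 * T.size →
          fB s < 2 * T.size := by
        intro s h1 h2; exact hBb s (Finset.mem_Ico.2 ⟨h1, h2⟩)
      refine ⟨f, ?_, ?_, ?_, ?_, eb, ?_⟩
      · intro s hs
        rw [thompson_states, Finset.mem_Ico] at hs
        simp only [Regex.size] at hs ⊢
        rcases Nat.lt_or_ge s (b + 2) with h | h
        · have hsb : s = b ∨ s = b + 1 := by omega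
          rcases hsb with rfl | rfl
          · rw [eb]; omega
          · rw [eb1]; omega
        rcases Nat.lt_or_ge s (b + 2 + 2 * S.size) with h2 | h2
        · rw [eA s h h2]; have := hAb' s h h2; omega
        · rw [eB s h2]
          have := hBb' s h2 (by omega)
          omega
      · intro k hk
        simp only [Regex.size] at hk
        by_cases hk0 : k = 0
        · refine ⟨b, ?_, ?_⟩
          · rw [thompson_states, Finset.mem_Ico]; simp only [Regex.size]; omega
          · rw [eb]; omega
        by_cases hk1 : k ≤ 2 * S.size
        · obtain ⟨s, hs, hfs⟩ := hAsurj (k - 1) (by omega)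
          rw [Finset.mem_Ico] at hs
          refine ⟨s, ?_, ?_⟩
          · rw [thompson_states, Finset.mem_Ico]; simp only [Regex.size]; omega
          · rw [eA s hs.1 hs.2, hfs]; omega
        by_cases hk2 : k ≤ 2 * S.size + 2 * T.size
        · obtain ⟨s, hs, hfs⟩ := hBsurj (k - (2 * S.size + 1)) (by omega)
          rw [Finset.mem_Ico] at hs
          refine ⟨s, ?_, ?_⟩
          · rw [thompson_states, Finset.mem_Ico]; simp only [Regex.size]; omega
          · rw [eB s hs.1, hfs]; omega
        · refine ⟨b + 1, ?_, ?_⟩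
          · rw [thompson_states, Finset.mem_Ico]; simp only [Regex.size]; omega
          · rw [eb1]; omega
      · intro s l t ht hnb
        simp only [thompson, thompson_start, thompson_accept, Finset.mem_union,
          Finset.mem_insert, Finset.mem_singleton, Prod.mk.injEq, not_or] at ht hnb
        rcases ht with ((⟨hs, -, ht'⟩ | ⟨hs, -, ht'⟩ | ⟨hs, -, ht'⟩ | ⟨hs, -, ht'⟩) | h) | h
        · rw [hs, ht', eb, eA (b + 2) le_rfl (by omega)]; omega
        · rw [hs, ht', eb, eB _ le_rfl]; omega
        · rw [hs, ht', eA (b + 2 + 1) (by omega) (by omega), eb1, hA1]; omega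
        · rw [hs, ht', eB _ (by omega), eb1, hB1]; omega
        · have hbd := thompson_trans_bound S (b + 2) h
          rw [eA s hbd.1 hbd.2.1, eA t hbd.2.2.1 hbd.2.2.2]
          have := hAtopo s l t h hnb.1
          omega
        · have hbd := thompson_trans_bound T (b + 2 + 2 * S.size) h
          rw [eB s hbd.1, eB t hbd.2.2.1]
          have := hBtopo s l t h hnb.2
          omega
      · intro s a t ht
        simp only [thompson, thompson_start, thompson_accept, Finset.mem_union,
          Finset.mem_insert, Finset.mem_singleton, Prod.mk.injEq, reduceCtorEq, false_and, and_false, false_or, or_false] at ht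
        rcases ht with h | h
        · have hbd := thompson_trans_bound S (b + 2) h
          rw [eA s hbd.1 hbd.2.1, eA t hbd.2.2.1 hbd.2.2.2, hAcons s a t h]
        · have hbd := thompson_trans_bound T (b + 2 + 2 * S.size) h
          rw [eB s hbd.1, eB t hbd.2.2.1, hBcons s a t h]; omega
      · rw [eb1]; simp only [Regex.size]; omega
  | star S ihS =>
      have hS := S.size_pos
      obtain ⟨fA, hAb, hAsurj, hAtopo, hAcons, hA0, hA1⟩ := ihS (b + 2)
      rw [thompson_states] at hAb hAsurj
      set f : ℕ → ℕ := fun s =>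
        if s = b then 0 else if s = b + 1 then 2 * S.size + 1 else fA s + 1 with hf
      have eb : f b = 0 := by simp [hf]
      have eb1 : f (b + 1) = 2 * S.size + 1 := by
        simp only [hf]; rw [if_neg (by omega)]; simp
      have eA : ∀ s, b + 2 ≤ s → f s = fA s + 1 := by
        intro s h1; simp only [hf]; rw [if_neg (by omega), if_neg (by omega)]
      have hAb' : ∀ s, b + 2 ≤ s → s < b + 2 + 2 * S.size → fA s < 2 * S.size := by
        intro s h1 h2; exact hAb s (Finset.mem_Ico.2 ⟨h1, h2⟩)
      refine ⟨f, ?_, ?_, ?_, ?_, eb, ?_⟩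
      · intro s hs
        rw [thompson_states, Finset.mem_Ico] at hs
        simp only [Regex.size] at hs ⊢
        rcases Nat.lt_or_ge s (b + 2) with h | h
        · have hsb : s = b ∨ s = b + 1 := by omega
          rcases hsb with rfl | rfl
          · rw [eb]; omega
          · rw [eb1]; omega
        · rw [eA s h]; have := hAb' s h (by omega); omega
      · intro k hk
        simp only [Regex.size] at hk
        by_cases hk0 : k = 0
        · refine ⟨b, ?_, ?_⟩
          · rw [thompson_states, Finset.mem_Ico]; simp only [Regex.size]; omega
          · rw [eb]; omega
        by_cases hk1 : k ≤ 2 * S.size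
        · obtain ⟨s, hs, hfs⟩ := hAsurj (k - 1) (by omega)
          rw [Finset.mem_Ico] at hs
          refine ⟨s, ?_, ?_⟩
          · rw [thompson_states, Finset.mem_Ico]; simp only [Regex.size]; omega
          · rw [eA s hs.1, hfs]; omega
        · refine ⟨b + 1, ?_, ?_⟩
          · rw [thompson_states, Finset.mem_Ico]; simp only [Regex.size]; omega
          · rw [eb1]; omega
      · intro s l t ht hnb
        simp only [thompson, thompson_start, thompson_accept, Finset.mem_union,
          Finset.mem_insert, Finset.mem_singleton, Prod.mk.injEq, not_or] at ht hnb
        rcases ht with (⟨hs, -, ht'⟩ | ⟨hs, -, ht'⟩ | ⟨hs, -, ht'⟩ | ⟨hs, -, ht'⟩) | h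
        · rw [hs, ht', eb, eA _ le_rfl]; omega
        · rw [hs, ht', eb, eb1]; omega
        · rw [hs, ht', eA _ (by omega), eb1, hA1]; omega
        · exact absurd ⟨hs, ht'⟩ hnb.1
        · have hbd := thompson_trans_bound S (b + 2) h
          rw [eA s hbd.1, eA t hbd.2.2.1]
          have := hAtopo s l t h hnb.2
          omega
      · intro s a t ht
        simp only [thompson, thompson_start, thompson_accept, Finset.mem_union,
          Finset.mem_insert, Finset.mem_singleton, Prod.mk.injEq, reduceCtorEq, false_and, and_false, false_or, or_false] at ht
        have hbd := thompson_trans_bound S (b + 2) ht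
        rw [eA s hbd.1, eA t hbd.2.2.1, hAcons s a t ht]
      · rw [eb1]; simp only [Regex.size]; omega

/-- a TNFA admits a topological ordering of its states with
respect to the forward transitions in which the two endpoints of every
`α`-transition (`α ∈ Σ`) are consecutive. -/
theorem thompson_topological_order_with_consecutive_alpha (R : Regex α) (b : ℕ) :
    ∃ f : ℕ → ℕ,
      Set.BijOn f ↑(thompson R b).states ↑(Finset.range (2 * R.size)) ∧
      (∀ (s : ℕ) (l : Option α) (t : ℕ), (s, l, t) ∈ (thompson R b).trans →
        (s, t) ∉ (thompson R b).back → f s < f t) ∧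
      (∀ (s : ℕ) (a : α) (t : ℕ), (s, some a, t) ∈ (thompson R b).trans →
        f t = f s + 1) := by
  obtain ⟨f, hb, hsurj, htopo, hcons, -, -⟩ := thompson_aux R b
  refine ⟨f, ?_, htopo, hcons⟩
  have hcard : (thompson R b).states.card = (Finset.range (2 * R.size)).card := by
    rw [thompson_states, Nat.card_Ico, Finset.card_range]; omega
  have hmaps : ∀ s ∈ (thompson R b).states, f s ∈ Finset.range (2 * R.size) := fun s hs =>
    Finset.mem_range.2 (hb s hs)
  have hsurj' : ∀ k ∈ Finset.range (2 * R.size), ∃ s, ∃ _ : s ∈ (thompson R b).states, f s = k := by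
    intro k hk
    obtain ⟨s, hs1, hs2⟩ := hsurj k (Finset.mem_range.1 hk)
    exact ⟨s, hs1, hs2⟩
  refine ⟨fun s hs => hmaps s hs, ?_, ?_⟩
  · intro x hx y hy hxy
    exact Finset.inj_on_of_surj_on_of_card_le (fun a _ => f a) (fun a ha => hmaps a ha)
      hsurj' (le_of_eq hcard) hx hy hxy
  · intro k hk
    obtain ⟨s, hs1, hs2⟩ := hsurj' k hk
    exact ⟨s, hs1, hs2⟩
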